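/- arXiv:2102.03492 — 4 statements merged into one kernel-verified Lean document; each statement's English description precedes it below -/
import Mathlib

section
/- Let X be a J-poset, let (A,B), (C,D) ∈ Str X, and suppose b ∈ B ∩ D. Then there exists J ⊆ X₁ such that (J, {b}) ∈ Str X, (A,B) < (J,{b}) in Str X, and (C,D) < (J,{b}) in Str X. -/
open Order Set

/-- The minimal upper bound set of `A`: the minimal elements of the set of upper bounds. -/
def mub (X : Type*) [PartialOrder X] (A : Set X) : Set X :=
  {x ∈ upperBounds A | ∀ y ∈ upperBounds A, ¬ y < x}

/-- The set of elements of height `i` in `X`. -/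
def level (X : Type*) [PartialOrder X] (i : ℕ) : Set X :=
  {x : X | Order.height x = (i : ℕ∞)}

/-- A J-poset: a countable poset with a unique minimal element satisfying (J1)-(J4). -/
structure IsJPoset (X : Type*) [PartialOrder X] : Prop where
  countable : Countable X
  uniqueMin : ∃! x : X, IsMin x
  dim2 : Order.krullDim X = 2
  mubFinite : ∀ A : Set X, A.Nonempty → (mub X A).Finite
  j2 : ∀ x ∈ level X 1, {z : X | x < z}.Infinite
  j3 : ∀ m ∈ level X 2, ∀ F : Set X, F ⊆ level X 1 → F.Finite →
        ∃ K : Set X, K ⊆ level X 1 ∧ K.Finite ∧ Disjoint K F ∧ mub X K = {m}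
  j4 : ∀ T : Set X, T ⊆ level X 2 → T.Finite → T.Nonempty →
        ∃ t ∈ level X 1, ∀ m ∈ T, t < m

/-- `(A, B)` is a member of `Str X`. -/
def StrMem (X : Type*) [PartialOrder X] (A B : Set X) : Prop :=
  A ⊆ level X 1 ∧ B ⊆ level X 2 ∧
  ((A.Finite ∧ A.Nonempty ∧ B.Finite ∧ B.Nonempty) ∨
    (∃ x, x ∈ level X 1 ∧ A = {x} ∧ B = {z ∈ level X 2 | x < z})) ∧
  (∃ a ∈ A, ∀ b ∈ B, a < b)

/-- `(C, D)` dominates `(A, B)` via `W`. -/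
def Dominates (X : Type*) [PartialOrder X] (C D A B W : Set X) : Prop :=
  A ⊂ C ∧ D ⊆ B ∧ W ⊆ C ∧ W.Nonempty ∧
  (∀ w ∈ W, ∀ d ∈ D, w < d) ∧
  (∀ a ∈ A, ∀ m : X, a < m → (∀ w ∈ W, w < m) → m ∈ D)

/-- The order on `Str X`: `(A,B) ≤ (C,D)`. -/
def StrLE (X : Type*) [PartialOrder X] (A B C D : Set X) : Prop :=
  (A = C ∧ B = D) ∨ ∃ W : Set X, Dominates X C D A B W

/-- The strict order on `Str X`: `(A,B) < (C,D)`. -/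
def StrLT (X : Type*) [PartialOrder X] (A B C D : Set X) : Prop :=
  StrLE X A B C D ∧ ¬(A = C ∧ B = D)

/-- `ℓ(A,B)`: the number of `a ∈ A` with `a < b` for all `b ∈ B`. -/
noncomputable def ell (X : Type*) [PartialOrder X] (A B : Set X) : ℕ :=
  {a ∈ A | ∀ b ∈ B, a < b}.ncard

/-- `η(A,B) = |A| - ℓ(A,B)`. -/
noncomputable def eta (X : Type*) [PartialOrder X] (A B : Set X) : ℕ :=
  A.ncard - ell X A B

/-- `Str X` as a type of pairs. -/
abbrev Str (X : Type*) [PartialOrder X] := {p : Set X × Set X // StrMem X p.1 p.2}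

def strLE {X : Type*} [PartialOrder X] (p q : Str X) : Prop :=
  StrLE X p.1.1 p.1.2 q.1.1 q.1.2

def strLT {X : Type*} [PartialOrder X] (p q : Str X) : Prop :=
  strLE p q ∧ p ≠ q

/-- Membership in `Str_F X`: members of `Str X` with both coordinates finite. -/
def StrFMem (X : Type*) [PartialOrder X] (A B : Set X) : Prop :=
  StrMem X A B ∧ A.Finite ∧ B.Finite

/-- `Str_F X` as a type of pairs. -/
abbrev StrF (X : Type*) [PartialOrder X] := {p : Set X × Set X // StrFMem X p.1 p.2}

def strFLE {X : Type*} [PartialOrder X] (p q : StrF X) : Prop :=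
  StrLE X p.1.1 p.1.2 q.1.1 q.1.2

/-- `K_{Str_F X}(z)`: all `(K, {b}) ∈ Str_F X` with `z ∈ K` and `mub K = {b}`. -/
def KSet (X : Type*) [PartialOrder X] (z : X) : Set (StrF X) :=
  {p | z ∈ p.1.1 ∧ ∃ b : X, p.1.2 = {b} ∧ mub X p.1.1 = {b}}

/-- The three-element poset `𝕀₂`: two incomparable minimal elements below one top element,
realized as the nonempty subsets of a two-element set ordered by inclusion. -/
abbrev I2 := {s : Set (Fin 2) // s.Nonempty}

/-!
Apply (J3) to `b` with `F = A ∪ C`: this gives a finite `K ⊆ X₁` avoiding `A ∪ C` with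
`mub K = {b}`. Because `dim X = 2`, the element `b` is then the only element strictly above all
of `K`, so `(A ∪ C ∪ K, {b})` dominates both `(A, B)` and `(C, D)` via `K`.
-/

section

variable {X : Type*} [PartialOrder X]

lemma IsJPoset.height_le_two (hX : IsJPoset X) (x : X) : height x ≤ 2 :=
  WithBot.coe_le_coe.mp ((height_le_krullDim x).trans_eq hX.dim2)

lemma StrMem.finite_fst {A B : Set X} (h : StrMem X A B) : A.Finite := by
  obtain ⟨-, -, ⟨hA, -⟩ | ⟨x, -, rfl, -⟩, -⟩ := h
  exacts [hA, finite_singleton x]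

lemma strMem_singleton {J : Set X} {a b : X} (hJ : J ⊆ level X 1) (hJfin : J.Finite)
    (hb : b ∈ level X 2) (ha : a ∈ J) (hab : a < b) : StrMem X J {b} := by
  refine ⟨hJ, singleton_subset_iff.2 hb,
    Or.inl ⟨hJfin, ⟨a, ha⟩, finite_singleton b, singleton_nonempty b⟩, a, ha, ?_⟩
  rintro _ rfl
  exact hab

lemma Dominates.strLT {A B C D W : Set X} (h : Dominates X C D A B W) : StrLT X A B C D :=
  ⟨Or.inr ⟨W, h⟩, fun hAC => h.1.ne hAC.1⟩

lemma dominates_singleton {A B J K : Set X} {b : X} (hAJ : A ⊂ J) (hbB : b ∈ B) (hKJ : K ⊆ J)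
    (hKne : K.Nonempty) (hKb : ∀ k ∈ K, k < b) (hb : ∀ m, (∀ k ∈ K, k < m) → m = b) :
    Dominates X J {b} A B K := by
  refine ⟨hAJ, singleton_subset_iff.2 hbB, hKJ, hKne, ?_, fun _ _ m _ hm => hb m hm⟩
  rintro k hk _ rfl
  exact hKb k hk

lemma nonempty_of_mem_mub_of_not_isMin {K : Set X} {b : X} (hb : b ∈ mub X K)
    (hmin : ¬IsMin b) : K.Nonempty := by
  rw [nonempty_iff_ne_empty]
  rintro rfl
  exact hmin fun y hy => (hy.lt_or_eq.resolve_left (hb.2 y (by simp))).ge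

lemma forall_lt_of_mem_mub {K : Set X} {b : X} (hK : K ⊆ level X 1) (hb : b ∈ level X 2)
    (hbK : b ∈ mub X K) : ∀ k ∈ K, k < b := by
  intro k hk
  refine (hbK.1 hk).lt_of_ne fun hkb => ?_
  have h := hK hk
  rw [level, mem_ofPred_eq, hkb, hb] at h
  norm_num at h

lemma eq_of_forall_lt_of_mub_eq_singleton (hdim : ∀ x : X, height x ≤ 2) {K : Set X}
    (hK : K ⊆ level X 1) (hKne : K.Nonempty) {b : X} (hb : b ∈ level X 2)
    (hmub : mub X K = {b}) {m : X} (hm : ∀ k ∈ K, k < m) : m = b := by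
  have hbK : b ∈ mub X K := hmub ▸ mem_singleton b
  suffices m ∈ mub X K by rwa [hmub] at this
  refine ⟨fun k hk => (hm k hk).le, fun y hy hym => ?_⟩
  obtain ⟨k, hk⟩ := hKne
  rcases (hy hk).lt_or_eq with hky | rfl
  · -- a chain `k < y < m` above an element of height one would reach height three
    have h := (add_le_add_left (height_add_one_le hky) 1).trans
      ((height_add_one_le hym).trans (hdim m))
    rw [hK hk] at h
    norm_num at h
  · exact hbK.2 _ hy (forall_lt_of_mem_mub hK hb hbK _ hk)

end

/-- If `(A,B), (C,D) ∈ Str X` and `b ∈ B ∩ D`, then there is `J ⊆ X₁` with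
`(J,{b}) ∈ Str X`, `(A,B) < (J,{b})`, and `(C,D) < (J,{b})` in `Str X`. -/
theorem stmt_5 {X : Type*} [PartialOrder X] (hX : IsJPoset X)
    (A B C D : Set X) (hAB : StrMem X A B) (hCD : StrMem X C D)
    (b : X) (hbB : b ∈ B) (hbD : b ∈ D) :
    ∃ J : Set X, J ⊆ level X 1 ∧ StrMem X J {b} ∧
      StrLT X A B J {b} ∧ StrLT X C D J {b} := by
  have hb : b ∈ level X 2 := hAB.2.1 hbB
  obtain ⟨K, hK1, hKfin, hKdisj, hKmub⟩ := hX.j3 b hb (A ∪ C) (union_subset hAB.1 hCD.1)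
    (hAB.finite_fst.union hCD.finite_fst)
  have hbK : b ∈ mub X K := hKmub ▸ mem_singleton b
  have hKb := forall_lt_of_mem_mub hK1 hb hbK
  have hKne : K.Nonempty :=
    nonempty_of_mem_mub_of_not_isMin hbK (height_ne_zero.1 (by rw [hb]; norm_num))
  have huniq : ∀ m, (∀ k ∈ K, k < m) → m = b := fun m =>
    eq_of_forall_lt_of_mub_eq_singleton hX.height_le_two hK1 hKne hb hKmub
  obtain ⟨k, hk⟩ := hKne
  have hkAC : k ∉ A ∪ C := disjoint_left.1 hKdisj hk
  have hAJ : A ⊂ A ∪ C ∪ K := (ssubset_iff_of_subset (subset_union_left.trans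
    subset_union_left)).2 ⟨k, Or.inr hk, fun h => hkAC (Or.inl h)⟩
  have hCJ : C ⊂ A ∪ C ∪ K := (ssubset_iff_of_subset (subset_union_right.trans
    subset_union_left)).2 ⟨k, Or.inr hk, fun h => hkAC (Or.inr h)⟩
  have hJ1 : A ∪ C ∪ K ⊆ level X 1 := union_subset (union_subset hAB.1 hCD.1) hK1
  refine ⟨A ∪ C ∪ K, hJ1, strMem_singleton hJ1
    ((hAB.finite_fst.union hCD.finite_fst).union hKfin) hb (Or.inr hk) (hKb k hk), ?_, ?_⟩
  · exact (dominates_singleton hAJ hbB subset_union_right ⟨k, hk⟩ hKb huniq).strLT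
  · exact (dominates_singleton hCJ hbD subset_union_right ⟨k, hk⟩ hKb huniq).strLT
end

section
/- Let X be a J-poset, let B ⊆ X₂ be finite and nonempty, and let (A,B) ∈ (Str X)_B with height_B(A,B) > 0. Then B = mub(A) if and only if the number of elements of (Str X)_B that are ≤ (A,B) is odd. -/
/-! Let `L = belowAll A B` be the elements of `A` below every element of `B`. A strictly smaller
`(C₀, B)` forces, through (E3), every strict upper bound of `L` into `B`; hence `(A, B)`
dominates `(C, B)` via `L` for every `C ⊊ A` meeting `L`, and the elements of `(Str X)_B` below
`(A, B)` are exactly the subsets of `A` meeting `L`. There are `2 ^ |A| - 2 ^ |A \ L|` of them,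
an odd number iff `L = A`. Finally `L = A` says precisely that `B = mub A`: the upper bounds of
the nontrivial level-one set `A` then lie outside `A`, so they are the strict upper bounds of
`L`, i.e. the antichain `B`. -/

open Order Set

section

variable {X : Type*} [PartialOrder X]

lemma lt_of_mem_level_of_lt {x y : X} {i j : ℕ} (hx : x ∈ level X i) (hy : y ∈ level X j)
    (hxy : x < y) : i < j := by
  have h := height_strictMono hxy (by rw [hx]; exact ENat.natCast_lt_top i)
  rw [hx, hy] at h
  exact_mod_cast h

lemma eq_of_mem_level {x : X} {i j : ℕ} (hi : x ∈ level X i) (hj : x ∈ level X j) :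
    i = j := by
  have h : (i : ℕ∞) = j := hi.symm.trans hj
  exact_mod_cast h

lemma isAntichain_level (i : ℕ) : IsAntichain (· ≤ ·) (level X i) :=
  fun _ hx _ hy hne hle => (lt_of_mem_level_of_lt hx hy (hle.lt_of_ne hne)).false

lemma mub_eq_of_upperBounds_eq {A B : Set X} (hAB : upperBounds A = B)
    (hB : IsAntichain (· ≤ ·) B) : mub X A = B := by
  ext b
  simp only [mub, hAB, mem_ofPred_eq]
  exact ⟨And.left, fun hb => ⟨hb, fun y hy hyb => hB hy hb hyb.ne hyb.le⟩⟩

def belowAll (A B : Set X) : Set X := {a ∈ A | ∀ b ∈ B, a < b}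

lemma StrLT.exists_dominates {A B C D : Set X} (h : StrLT X A B C D) :
    ∃ W, Dominates X C D A B W :=
  h.1.resolve_left h.2

lemma Dominates.subset_belowAll {A B C W : Set X} (h : Dominates X A B C B W) :
    W ⊆ belowAll A B :=
  fun w hw => ⟨h.2.2.1 hw, h.2.2.2.2.1 w hw⟩

lemma Dominates.mem_of_belowAll_lt {A B C W : Set X} (h : Dominates X A B C B W)
    (hC : ∃ c ∈ C, ∀ b ∈ B, c < b) {m : X} (hm : ∀ a ∈ belowAll A B, a < m) :
    m ∈ B := by
  obtain ⟨c, hcC, hcB⟩ := hC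
  exact h.2.2.2.2.2 c hcC m (hm c ⟨h.1.subset hcC, hcB⟩) fun w hw => hm w (h.subset_belowAll hw)

lemma dominates_belowAll {A B C : Set X} (hCA : C ⊂ A) (hne : (belowAll A B).Nonempty)
    (hB : ∀ m, (∀ a ∈ belowAll A B, a < m) → m ∈ B) :
    Dominates X A B C B (belowAll A B) :=
  ⟨hCA, subset_rfl, sep_subset _ _, hne, fun _ hw => hw.2, fun _ _ m _ hm => hB m hm⟩

lemma setOf_strMem_strLE_eq {A B : Set X} (hA1 : A ⊆ level X 1) (hA : A.Finite)
    (hB2 : B ⊆ level X 2) (hBf : B.Finite) (hBne : B.Nonempty)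
    (hB : ∀ m, (∀ a ∈ belowAll A B, a < m) → m ∈ B) :
    {C | StrMem X C B ∧ StrLE X C B A B} = {C | C ⊆ A ∧ (C ∩ belowAll A B).Nonempty} := by
  ext C
  constructor
  · rintro ⟨⟨-, -, -, c, hcC, hcB⟩, ⟨rfl, -⟩ | ⟨W, hdom⟩⟩
    · exact ⟨subset_rfl, c, hcC, hcC, hcB⟩
    · exact ⟨hdom.1.subset, c, hcC, hdom.1.subset hcC, hcB⟩
  · rintro ⟨hCA, c, hcC, hcL⟩
    have hC : StrMem X C B :=
      ⟨hCA.trans hA1, hB2, .inl ⟨hA.subset hCA, ⟨c, hcC⟩, hBf, hBne⟩, c, hcC, hcL.2⟩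
    refine ⟨hC, ?_⟩
    rcases hCA.eq_or_ssubset with rfl | hCA
    · exact .inl ⟨rfl, rfl⟩
    · exact .inr ⟨_, dominates_belowAll hCA ⟨c, hcL⟩ hB⟩

lemma eq_mub_iff_subset_belowAll {A B : Set X} (hA1 : A ⊆ level X 1) (hB2 : B ⊆ level X 2)
    (hA : A.Nontrivial) (hB : ∀ m, (∀ a ∈ belowAll A B, a < m) → m ∈ B) :
    B = mub X A ↔ A ⊆ belowAll A B := by
  constructor
  · rintro rfl a ha
    refine ⟨ha, fun b hb => (hb.1 ha).lt_of_ne fun hab => ?_⟩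
    exact absurd (eq_of_mem_level (hA1 ha) (hab ▸ hB2 hb)) (by norm_num)
  · intro h
    have hub : upperBounds A = B := by
      refine Subset.antisymm (fun m hm => hB m fun a ha => (hm ha.1).lt_of_ne ?_)
        fun b hb a ha => ((h ha).2 b hb).le
      rintro rfl
      obtain ⟨x, hx, hxa⟩ := hA.exists_ne a
      exact (lt_of_mem_level_of_lt (hA1 hx) (hA1 ha.1) ((hm hx).lt_of_ne hxa)).false
    exact (mub_eq_of_upperBounds_eq hub ((isAntichain_level 2).subset hB2)).symm

end

section

variable {α : Type*}

lemma setOf_subset_inter_nonempty_eq (A L : Set α) :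
    {C | C ⊆ A ∧ (C ∩ L).Nonempty} = 𝒫 A \ 𝒫 (A \ L) := by
  ext C
  simp only [mem_ofPred_eq, mem_sdiff, mem_powerset_iff, subset_sdiff, not_and,
    not_disjoint_iff_nonempty_inter]
  exact and_congr_right fun hC => ⟨fun h _ => h, fun h => h hC⟩

lemma ncard_setOf_subset_inter_nonempty {A : Set α} (hA : A.Finite) (L : Set α) :
    {C | C ⊆ A ∧ (C ∩ L).Nonempty}.ncard = 2 ^ A.ncard - 2 ^ (A \ L).ncard := by
  rw [setOf_subset_inter_nonempty_eq,
    ncard_sdiff (powerset_mono.2 sdiff_subset) hA.sdiff.powerset, ncard_powerset _ hA,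
    ncard_powerset _ hA.sdiff]

lemma odd_two_pow_sub_two_pow_iff {m n : ℕ} (h : m ≤ n) :
    Odd (2 ^ n - 2 ^ m) ↔ m = 0 ∧ n ≠ 0 := by
  rw [← Nat.not_even_iff_odd, Nat.even_sub (Nat.pow_le_pow_right two_pos h), Nat.even_pow,
    Nat.even_pow]
  simp only [even_two, true_and]
  omega

lemma odd_ncard_setOf_subset_inter_nonempty_iff {A : Set α} (hA : A.Finite) (hA₀ : A.Nonempty)
    (L : Set α) : Odd {C | C ⊆ A ∧ (C ∩ L).Nonempty}.ncard ↔ A ⊆ L := by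
  rw [ncard_setOf_subset_inter_nonempty hA,
    odd_two_pow_sub_two_pow_iff (ncard_le_ncard sdiff_subset hA), ncard_eq_zero hA.sdiff,
    sdiff_eq_empty]
  exact and_iff_left (hA₀.ncard_pos hA).ne'

end

theorem stmt_9_general {X : Type*} [PartialOrder X]
    (B : Set X) (hB2 : B ⊆ level X 2) (hBf : B.Finite) (hBne : B.Nonempty)
    (A : Set X) (hAB : StrMem X A B)
    (hpos : ∃ C : Set X, StrMem X C B ∧ StrLT X C B A B) :
    B = mub X A ↔ Odd ({C : Set X | StrMem X C B ∧ StrLE X C B A B}.ncard) := by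
  obtain ⟨C₀, hC₀, hlt⟩ := hpos
  obtain ⟨W, hdom⟩ := hlt.exists_dominates
  have hclosed : ∀ m, (∀ a ∈ belowAll A B, a < m) → m ∈ B :=
    fun _ => hdom.mem_of_belowAll_lt hC₀.2.2.2
  have hA : A.Nontrivial := by
    obtain ⟨c, hc, -⟩ := hC₀.2.2.2
    obtain ⟨a, ha, haC⟩ := exists_of_ssubset hdom.1
    exact ⟨c, hdom.1.subset hc, a, ha, fun h => haC (h ▸ hc)⟩
  rw [setOf_strMem_strLE_eq hAB.1 hAB.finite_fst hB2 hBf hBne hclosed,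
    odd_ncard_setOf_subset_inter_nonempty_iff hAB.finite_fst hA.nonempty,
    eq_mub_iff_subset_belowAll hAB.1 hB2 hA hclosed]

/-- If `B ⊆ X₂` is finite and nonempty and `(A,B) ∈ (Str X)_B` has height
greater than `0` in `(Str X)_B`, then `B = mub A` iff the number of elements of
`(Str X)_B` below `(A,B)` is odd. -/
theorem stmt_9 {X : Type*} [PartialOrder X] (hX : IsJPoset X)
    (B : Set X) (hB2 : B ⊆ level X 2) (hBf : B.Finite) (hBne : B.Nonempty)
    (A : Set X) (hAB : StrMem X A B)
    (hpos : ∃ C : Set X, StrMem X C B ∧ StrLT X C B A B) :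
    B = mub X A ↔ Odd ({C : Set X | StrMem X C B ∧ StrLE X C B A B}.ncard) :=
  stmt_9_general B hB2 hBf hBne A hAB hpos
end

section
/- Let X be a J-poset, let B ⊆ X₂ be finite and nonempty, and let (A,B) ∈ (Str X)_B. Then the set of elements of (Str X)_B that are ≤ (A,B), with the order inherited from Str X, is order-isomorphic to the poset 𝕀₂ (two incomparable minimal elements both below a single top element) if and only if A = {a,b} for two distinct elements a, b ∈ X₁ and B = mub(A). -/
/-
If `(C, B) < (A, B)` with `C` sharing an element with `L = {a ∈ A | a < b for all b ∈ B}`, then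
(E3) forces every common strict upper bound of `L` into `B`; conversely, once that holds, `(A, B)`
dominates `(C, B)` via `L` for every nonempty `C ⊊ A` inside `L`. If the fiber below `(A, B)` is
`𝕀₂`, some `(C, B)` lies strictly below, so `L` has an element `c`, and a second one `l`: otherwise
the infinitely many elements above `c` (J2) would all lie in the finite set `B`. The nonempty
subsets of `{c, l}` then form a copy of `𝕀₂` inside the fiber, so `A = {c, l}`, and `B` is the set
of common strict upper bounds of `c` and `l`, which in dimension 2 is `mub {c, l}`. Conversely, for
`A = {a, b}` and `B = mub A` the fiber is the set of nonempty subsets of `{a, b}` under inclusion.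
-/

open Order Set

section Levels

variable {X : Type*} [PartialOrder X] {i : ℕ} {x y : X}

lemma mem_level_iff : x ∈ level X i ↔ height x = i := Iff.rfl

lemma eq_of_le_of_mem_level (hx : x ∈ level X i) (hy : y ∈ level X i) (hxy : x ≤ y) :
    x = y := by
  by_contra hne
  have hlt := height_strictMono (hxy.lt_of_ne hne) (by rw [mem_level_iff.1 hx]; simp)
  rw [mem_level_iff.1 hx, mem_level_iff.1 hy] at hlt
  exact hlt.false

lemma isMax_of_lt_of_mem_level (hdim : krullDim X ≤ i + 1) (hx : x ∈ level X i) (hxy : x < y) :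
    IsMax y := by
  intro z hyz
  by_contra hzy
  have hy := height_add_one_le hxy
  have hz := height_add_one_le (hyz.lt_of_not_ge hzy)
  rw [mem_level_iff.1 hx] at hy
  have hzdim : height z ≤ i + 1 := by
    exact_mod_cast (height_le_krullDim z).trans hdim
  have : (i : ℕ∞) + 1 + 1 ≤ i + 1 := calc
    (i : ℕ∞) + 1 + 1 ≤ height y + 1 := by gcongr
    _ ≤ height z := hz
    _ ≤ i + 1 := hzdim
  norm_cast at this
  omega

end Levels

section Mub

variable {X : Type*} [PartialOrder X] {a b m : X}

lemma lt_of_mem_upperBounds_pair (ha : a ∈ level X 1) (hb : b ∈ level X 1) (hab : a ≠ b)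
    (hm : m ∈ upperBounds {a, b}) : a < m ∧ b < m := by
  refine ⟨(hm (by simp)).lt_of_ne ?_, (hm (by simp)).lt_of_ne ?_⟩
  · rintro rfl
    exact hab (eq_of_le_of_mem_level hb ha (hm (by simp))).symm
  · rintro rfl
    exact hab (eq_of_le_of_mem_level ha hb (hm (by simp)))

lemma mub_pair_eq (hdim : krullDim X ≤ 2) (ha : a ∈ level X 1) (hb : b ∈ level X 1)
    (hab : a ≠ b) : mub X {a, b} = {m | a < m ∧ b < m} := by
  ext m
  refine ⟨fun hm => lt_of_mem_upperBounds_pair ha hb hab hm.1, fun ⟨ham, hbm⟩ => ?_⟩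
  refine ⟨by rintro x (rfl | rfl); exacts [ham.le, hbm.le], fun y hy hym => ?_⟩
  have hay := (lt_of_mem_upperBounds_pair ha hb hab hy).1
  exact (isMax_of_lt_of_mem_level (i := 1) (by exact_mod_cast hdim) ha hay).not_lt hym

end Mub

section NonemptySubsets

variable {X ι : Type*}

def Function.Injective.nonemptySubsetsOrderIso {v : ι → X} (hv : Function.Injective v) :
    {C : Set X | C.Nonempty ∧ C ⊆ range v} ≃o {s : Set ι // s.Nonempty} where
  toFun C := ⟨v ⁻¹' C.1, C.2.1.preimage' C.2.2⟩
  invFun s := ⟨v '' s.1, s.2.image v, image_subset_range v s.1⟩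
  left_inv C := Subtype.ext (image_preimage_eq_of_subset C.2.2)
  right_inv s := Subtype.ext (preimage_image_eq s.1 hv)
  map_rel_iff' {C _} := preimage_subset_preimage_iff C.2.2

def pairNonemptySubsetsOrderIso {a b : X} (hab : a ≠ b) :
    {C : Set X | C.Nonempty ∧ C ⊆ {a, b}} ≃o I2 :=
  have hv : Function.Injective ![a, b] := by
    intro i j; fin_cases i <;> fin_cases j <;> simp [hab, hab.symm]
  (OrderIso.setCongr _ _ (by rw [Matrix.range_cons_cons_empty])).trans hv.nonemptySubsetsOrderIso

instance : Nontrivial I2 :=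
  ⟨⟨⟨{0}, singleton_nonempty 0⟩, ⟨{1}, singleton_nonempty 1⟩, by simp⟩⟩

end NonemptySubsets

section Str

variable {X : Type*} [PartialOrder X] {A B C W : Set X}

-- `ell X A B` is the cardinality of `lowerPart A B`.
def lowerPart (A B : Set X) : Set X := {a ∈ A | ∀ b ∈ B, a < b}

def strictUpperBounds (s : Set X) : Set X := {m | ∀ l ∈ s, l < m}

-- The elements of `(Str X)_B` below `(A, B)`, recorded by their first coordinates.
variable (X) in
def strFiberIic (A B : Set X) : Set (Set X) := {C | StrMem X C B ∧ StrLE X C B A B}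

lemma StrMem.lowerPart_nonempty (h : StrMem X A B) : (lowerPart A B).Nonempty :=
  h.2.2.2

lemma StrMem.finite_of_ssubset (h : StrMem X A B) (hC : C.Nonempty) (hCA : C ⊂ A) :
    A.Finite ∧ B.Finite ∧ B.Nonempty := by
  rcases h.2.2.1 with ⟨hAf, -, hBf, hBne⟩ | ⟨x, -, rfl, -⟩
  · exact ⟨hAf, hBf, hBne⟩
  · exact absurd (ssubset_singleton_iff.1 hCA) hC.ne_empty

lemma StrLE.subset {D : Set X} (h : StrLE X A B C D) : A ⊆ C := by
  rcases h with ⟨rfl, -⟩ | ⟨W, hW⟩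
  exacts [subset_rfl, hW.1.1]

lemma Dominates.strictUpperBounds_lowerPart_subset (h : Dominates X A B C B W) {c : X}
    (hc : c ∈ C) (hcB : ∀ b ∈ B, c < b) : strictUpperBounds (lowerPart A B) ⊆ B := by
  obtain ⟨hCA, -, hWA, -, hWB, hE3⟩ := h
  exact fun m hm => hE3 c hc m (hm c ⟨hCA.1 hc, hcB⟩)
    fun w hw => hm w ⟨hWA hw, hWB w hw⟩

lemma dominates_lowerPart (hCA : C ⊂ A) (hL : (lowerPart A B).Nonempty)
    (hsat : strictUpperBounds (lowerPart A B) ⊆ B) :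
    Dominates X A B C B (lowerPart A B) :=
  ⟨hCA, subset_rfl, fun _ hl => hl.1, hL, fun _ hl => hl.2, fun _ _ _ _ hm => hsat hm⟩

lemma self_mem_strFiberIic (hAB : StrMem X A B) : A ∈ strFiberIic X A B :=
  ⟨hAB, Or.inl ⟨rfl, rfl⟩⟩

lemma mem_strFiberIic_of_ssubset (hAB : StrMem X A B)
    (hsat : strictUpperBounds (lowerPart A B) ⊆ B) (hC : C.Nonempty) (hCA : C ⊂ A)
    (hCL : C ⊆ lowerPart A B) : C ∈ strFiberIic X A B := by
  obtain ⟨hAf, hBf, hBne⟩ := hAB.finite_of_ssubset hC hCA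
  obtain ⟨c, hc⟩ := hC
  exact ⟨⟨hCA.1.trans hAB.1, hAB.2.1, Or.inl ⟨hAf.subset hCA.1, ⟨c, hc⟩, hBf, hBne⟩,
    c, hc, (hCL hc).2⟩, Or.inr ⟨_, dominates_lowerPart hCA hAB.lowerPart_nonempty hsat⟩⟩

lemma ssubset_of_mem_strFiberIic (hC : C ∈ strFiberIic X A B) (hne : C ≠ A) :
    C ⊂ A ∧ (C ∩ lowerPart A B).Nonempty ∧ strictUpperBounds (lowerPart A B) ⊆ B := by
  obtain ⟨hCB, ⟨rfl, -⟩ | ⟨W, hW⟩⟩ := hC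
  · exact absurd rfl hne
  obtain ⟨c, hc, hcB⟩ := hCB.2.2.2
  exact ⟨hW.1, ⟨c, hc, hW.1.1 hc, hcB⟩, hW.strictUpperBounds_lowerPart_subset hc hcB⟩

lemma strFiberIic_eq (hAB : StrMem X A B) (hL : lowerPart A B = A)
    (hsat : strictUpperBounds (lowerPart A B) ⊆ B) :
    strFiberIic X A B = {C | C.Nonempty ∧ C ⊆ A} := by
  ext C
  refine ⟨fun ⟨hCB, hle⟩ => ⟨hCB.2.2.2.imp fun _ h => h.1, hle.subset⟩, fun ⟨hC, hCA⟩ => ?_⟩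
  rcases hCA.eq_or_ssubset with rfl | hss
  · exact self_mem_strFiberIic hAB
  · exact mem_strFiberIic_of_ssubset hAB hsat hC hss (hL.symm ▸ hCA)

end Str

section Fiber

variable {X : Type*} [PartialOrder X] {A B : Set X} {a b c l : X}

lemma exists_ne_mem_lowerPart (hX : IsJPoset X) (hA : A ⊆ level X 1) (hBf : B.Finite)
    (hsat : strictUpperBounds (lowerPart A B) ⊆ B) (hc : c ∈ lowerPart A B) :
    ∃ l ∈ lowerPart A B, l ≠ c := by
  by_contra! h
  refine (hX.j2 c (hA hc.1)).mono (fun m hm => hsat fun l hl => ?_) hBf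
  rwa [h l hl]

lemma pair_eq_of_card_strFiberIic_le (hAB : StrMem X A B)
    (hsat : strictUpperBounds (lowerPart A B) ⊆ B) (hc : c ∈ lowerPart A B)
    (hl : l ∈ lowerPart A B) (hcl : c ≠ l) (hfin : (strFiberIic X A B).Finite)
    (hcard : Nat.card (strFiberIic X A B) ≤ Nat.card I2) : {c, l} = A := by
  by_contra hne
  have hss : {c, l} ⊂ A := (pair_subset hc.1 hl.1).ssubset_of_ne hne
  have hsub : {C : Set X | C.Nonempty ∧ C ⊆ {c, l}} ⊆ strFiberIic X A B :=
    fun C ⟨hC, hCcl⟩ => mem_strFiberIic_of_ssubset hAB hsat hC (hCcl.trans_ssubset hss)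
      (hCcl.trans (pair_subset hc hl))
  have hlt := hfin.card_lt_card <|
    (ssubset_iff_of_subset hsub).2 ⟨A, self_mem_strFiberIic hAB, fun hA => hss.2 hA.2⟩
  rw [Nat.card_congr (pairNonemptySubsetsOrderIso hcl).toEquiv] at hlt
  omega

lemma exists_pair_of_card_strFiberIic_eq (hX : IsJPoset X) (hAB : StrMem X A B)
    (hcard : Nat.card (strFiberIic X A B) = Nat.card I2) :
    ∃ a b : X, a ≠ b ∧ a ∈ level X 1 ∧ b ∈ level X 1 ∧ A = {a, b} ∧ B = mub X A := by
  have : Finite (strFiberIic X A B) := Nat.finite_of_card_ne_zero (hcard ▸ Nat.card_pos.ne')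
  have : Nontrivial (strFiberIic X A B) :=
    Finite.one_lt_card_iff_nontrivial.1 (hcard ▸ Finite.one_lt_card)
  obtain ⟨C, hCA⟩ := exists_ne (⟨A, self_mem_strFiberIic hAB⟩ : strFiberIic X A B)
  obtain ⟨hss, ⟨c, hcC, hc⟩, hsat⟩ :=
    ssubset_of_mem_strFiberIic C.2 fun h => hCA (Subtype.ext h)
  obtain ⟨-, hBf, -⟩ := hAB.finite_of_ssubset ⟨c, hcC⟩ hss
  obtain ⟨l, hl, hlc⟩ := exists_ne_mem_lowerPart hX hAB.1 hBf hsat hc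
  have hpair := pair_eq_of_card_strFiberIic_le hAB hsat hc hl hlc.symm (toFinite _) hcard.le
  refine ⟨c, l, hlc.symm, hAB.1 hc.1, hAB.1 hl.1, hpair.symm, ?_⟩
  rw [← hpair, mub_pair_eq hX.dim2.le (hAB.1 hc.1) (hAB.1 hl.1) hlc.symm]
  refine subset_antisymm (fun m hm => ⟨hc.2 m hm, hl.2 m hm⟩) fun m ⟨hcm, hlm⟩ => hsat ?_
  rintro x hx
  rcases hpair ▸ hx.1 with rfl | rfl
  exacts [hcm, hlm]

lemma strLE_iff_subset_of_mem_strFiberIic_pair (hab : a ≠ b)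
    {C C' : Set X} (hC : C ∈ strFiberIic X {a, b} B) (hC' : C' ∈ strFiberIic X {a, b} B) :
    StrLE X C B C' B ↔ C ⊆ C' := by
  refine ⟨StrLE.subset, fun hCC' => ?_⟩
  rcases hCC'.eq_or_ssubset with rfl | hss
  · exact Or.inl ⟨rfl, rfl⟩
  have hC'ab : C' ⊆ {a, b} := hC'.2.subset
  have hfin : C'.Finite := (toFinite _).subset hC'ab
  have hCne : C.Nonempty := hC.1.2.2.2.imp fun _ h => h.1
  have : C' = {a, b} := eq_of_subset_of_ncard_le hC'ab (by
    rw [ncard_pair hab]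
    have := ncard_lt_ncard hss hfin
    have := (ncard_pos (hfin.subset hss.1)).2 hCne
    omega)
  exact this ▸ hC.2

lemma exists_orderIso_I2_of_pair (hdim : krullDim X ≤ 2) (ha : a ∈ level X 1)
    (hb : b ∈ level X 1) (hab : a ≠ b) (hAB : StrMem X {a, b} (mub X {a, b})) :
    ∃ f : strFiberIic X {a, b} (mub X {a, b}) → I2, Function.Bijective f ∧
      ∀ C C' : strFiberIic X {a, b} (mub X {a, b}),
        StrLE X C.1 (mub X {a, b}) C'.1 (mub X {a, b}) ↔ f C ≤ f C' := by
  have hmub := mub_pair_eq hdim ha hb hab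
  have hL : lowerPart {a, b} (mub X {a, b}) = {a, b} := by
    refine subset_antisymm (fun _ hx => hx.1) fun x hx => ⟨hx, fun m hm => ?_⟩
    rw [hmub] at hm
    rcases hx with rfl | rfl
    exacts [hm.1, hm.2]
  have hsat : strictUpperBounds (lowerPart {a, b} (mub X {a, b})) ⊆ mub X {a, b} := by
    rw [hL, hmub]
    exact fun m hm => ⟨hm a (by simp), hm b (by simp)⟩
  let e := (OrderIso.setCongr _ _ (strFiberIic_eq hAB hL hsat)).trans
    (pairNonemptySubsetsOrderIso hab)
  refine ⟨e, e.bijective, fun C C' => ?_⟩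
  rw [strLE_iff_subset_of_mem_strFiberIic_pair hab C.2 C'.2]
  exact e.le_iff_le.symm

end Fiber

theorem stmt_10_general {X : Type*} [PartialOrder X] (hX : IsJPoset X)
    (B : Set X) (A : Set X) (hAB : StrMem X A B) :
    (∃ f : {C : Set X // StrMem X C B ∧ StrLE X C B A B} → I2,
      Function.Bijective f ∧
      ∀ C C' : {C : Set X // StrMem X C B ∧ StrLE X C B A B},
        StrLE X C.1 B C'.1 B ↔ f C ≤ f C') ↔
    (∃ a b : X, a ≠ b ∧ a ∈ level X 1 ∧ b ∈ level X 1 ∧ A = {a, b} ∧ B = mub X A) := by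
  constructor
  · rintro ⟨f, hf, -⟩
    exact exists_pair_of_card_strFiberIic_eq hX hAB (Nat.card_eq_of_bijective f hf)
  · rintro ⟨a, b, hab, ha, hb, rfl, rfl⟩
    exact exists_orderIso_I2_of_pair hX.dim2.le ha hb hab hAB

/-- For `(A,B) ∈ (Str X)_B` with `B ⊆ X₂` finite nonempty, the set of elements
of `(Str X)_B` below `(A,B)`, with the inherited order, is order-isomorphic to `𝕀₂` iff
`A = {a, b}` for distinct `a, b ∈ X₁` and `B = mub A`. -/
theorem stmt_10 {X : Type*} [PartialOrder X] (hX : IsJPoset X)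
    (B : Set X) (hB2 : B ⊆ level X 2) (hBf : B.Finite) (hBne : B.Nonempty)
    (A : Set X) (hAB : StrMem X A B) :
    (∃ f : {C : Set X // StrMem X C B ∧ StrLE X C B A B} → I2,
      Function.Bijective f ∧
      ∀ C C' : {C : Set X // StrMem X C B ∧ StrLE X C B A B},
        StrLE X C.1 B C'.1 B ↔ f C ≤ f C') ↔
    (∃ a b : X, a ≠ b ∧ a ∈ level X 1 ∧ b ∈ level X 1 ∧ A = {a, b} ∧ B = mub X A) :=
  stmt_10_general hX B A hAB
end

section
/- Let X and Y be J-posets and let φ: Str X → Str Y be an isomorphism of posets. For every x ∈ X₁ there exists s ∈ Y₁ such that φ({x}, {z ∈ X₂ : z > x}) = ({s}, {z ∈ Y₂ : z > s}). -/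
open Order Set

/-!
The special elements `({x}, {z ∈ X₂ : z > x})` of `Str X` are characterised order-theoretically:
they are exactly the `p` such that every `q` whose strict upper set contains that of `p` equals `p`.
Such a characterisation is transported by any isomorphism `Str X ≃ Str Y`.

A finite `(A, B)` fails it: for `a ∈ A` below all of `B`, everything strictly above `(A, B)` is
strictly above `({a}, {z ∈ X₂ : z > a})`. A special `p = ({x}, B)` has it: given `q`, for each
`d ∈ B` (J3) gives a finite `K ⊆ X₁` avoiding `x` and the first coordinate of `q` with
`mub K = {d}`; then `(K ∪ {x}, {d})` lies strictly above `p`, hence above `q`, which forces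
`q = ({x}, D)` with `d ∈ D`. So `D ⊇ B` is infinite, and `q = p`.
-/

section Levels

variable {X : Type*} [PartialOrder X]

lemma height_lt_top_of_krullDim_ne_top (h : krullDim X ≠ ⊤) (x : X) : height x < ⊤ := by
  have hx : (height x : WithBot ℕ∞) < ⊤ := (height_le_krullDim x).trans_lt h.lt_top
  exact WithBot.coe_lt_coe.mp hx

lemma wellFoundedLT_of_krullDim_ne_top (h : krullDim X ≠ ⊤) : WellFoundedLT X :=
  StrictMono.wellFoundedLT (f := fun x : X => height x)
    fun _ _ hab => height_strictMono hab (height_lt_top_of_krullDim_ne_top h _)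

lemma height_le_two_of_krullDim_eq_two (h : krullDim X = 2) (x : X) : height x ≤ 2 := by
  have hx := height_le_krullDim x
  rw [h] at hx
  exact WithBot.coe_le_coe.mp hx

lemma mem_level_two_of_lt (h : krullDim X = 2) {a z : X} (ha : a ∈ level X 1) (haz : a < z) :
    z ∈ level X 2 := by
  have hlt : height a < height z :=
    height_strictMono haz (height_lt_top_of_krullDim_ne_top (h ▸ by decide) a)
  have ha1 : height a = 1 := ha
  rw [ha1] at hlt
  exact le_antisymm (height_le_two_of_krullDim_eq_two h z) (Order.add_one_le_of_lt hlt)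

lemma not_lt_of_mem_level_two (h : krullDim X = 2) {d : X} (hd : d ∈ level X 2) (m : X) :
    ¬ d < m := fun hdm => by
  have hlt : height d < height m :=
    height_strictMono hdm (height_lt_top_of_krullDim_ne_top (h ▸ by decide) d)
  have hd2 : height d = 2 := hd
  exact (hd2 ▸ hlt).not_ge (height_le_two_of_krullDim_eq_two h m)

lemma lt_of_le_of_mem_level {i j : ℕ} (hij : i ≠ j) {a b : X} (ha : a ∈ level X i)
    (hb : b ∈ level X j) (hab : a ≤ b) : a < b :=
  hab.lt_of_ne fun h => hij (by exact_mod_cast (ha.symm.trans (h ▸ hb) : (i : ℕ∞) = j))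

lemma le_of_mub_eq_singleton [WellFoundedLT X] {K : Set X} {d m : X} (hmub : mub X K = {d})
    (hm : m ∈ upperBounds K) : d ≤ m := by
  obtain ⟨y, hym, hmin⟩ := exists_minimal_le_of_wellFoundedLT (· ∈ upperBounds K) m hm
  have hy : y ∈ mub X K := ⟨hmin.prop, fun z hz => hmin.not_lt hz⟩
  rw [hmub, mem_singleton_iff] at hy
  exact hy ▸ hym

lemma IsJPoset.infinite_setOf_lt (hX : IsJPoset X) {a : X} (ha : a ∈ level X 1) :
    {z ∈ level X 2 | a < z}.Infinite :=
  (hX.j2 a ha).mono fun _ hz => ⟨mem_level_two_of_lt hX.dim2 ha hz, hz⟩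

end Levels

section Str

variable {X : Type*} [PartialOrder X]

def IsSpecial (p : Str X) : Prop :=
  ∃ s ∈ level X 1, p.1 = ({s}, {z ∈ level X 2 | s < z})

def IsDeterminedByStrictUpperSet (p : Str X) : Prop :=
  ∀ q : Str X, {r | strLT p r} ⊆ {r | strLT q r} → q = p

def specialStr (a : X) (ha : a ∈ level X 1) : Str X :=
  ⟨({a}, {z ∈ level X 2 | a < z}),
    singleton_subset_iff.2 ha, sep_subset _ _, Or.inr ⟨a, ha, rfl, rfl⟩,
    a, mem_singleton a, fun _ hb => hb.2⟩

lemma StrMem.nonempty_fst {A B : Set X} (h : StrMem X A B) : A.Nonempty := by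
  rcases h.2.2.1 with ⟨-, hA, -⟩ | ⟨y, -, rfl, -⟩
  exacts [hA, singleton_nonempty y]

lemma strLE_antisymm {p q : Str X} (hpq : strLE p q) (hqp : strLE q p) : p = q := by
  rcases hpq with ⟨hA, hB⟩ | ⟨W, hW⟩
  · exact Subtype.ext (Prod.ext hA hB)
  rcases hqp with ⟨hA, hB⟩ | ⟨W', hW'⟩
  · exact (Subtype.ext (Prod.ext hA hB)).symm
  · exact absurd (hW.1.trans hW'.1) (ssubset_irrefl _)

lemma fst_ssubset_and_snd_subset_of_strLT {q r : Str X} (h : strLT q r) :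
    q.1.1 ⊂ r.1.1 ∧ r.1.2 ⊆ q.1.2 := by
  obtain ⟨⟨hA, hB⟩ | ⟨W, hAC, hDB, -⟩, hne⟩ := h
  · exact absurd (Subtype.ext (Prod.ext hA hB)) hne
  · exact ⟨hAC, hDB⟩

lemma strLT_specialStr_of_strLT {p r : Str X} {a : X} (ha : a ∈ p.1.1) (hab : ∀ b ∈ p.1.2, a < b)
    (hpr : strLT p r) : strLT (specialStr a (p.2.1 ha)) r := by
  obtain ⟨⟨hA, hB⟩ | ⟨W, hAC, hDB, hWC, hWne, hWD, hmaxD⟩, hne⟩ := hpr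
  · exact absurd (Subtype.ext (Prod.ext hA hB)) hne
  have haC : {a} ⊂ r.1.1 := (singleton_subset_iff.2 ha).trans_ssubset hAC
  refine ⟨Or.inr ⟨W, haC, fun d hd => ⟨p.2.2.1 (hDB hd), hab d (hDB hd)⟩, hWC, hWne, hWD, ?_⟩,
    fun he => haC.ne (congrArg (·.1.1) he)⟩
  intro a' ha' m ham hWm
  rw [mem_singleton_iff.mp ha'] at ham
  exact hmaxD a ha m ham hWm

theorem IsDeterminedByStrictUpperSet.isSpecial (hX : IsJPoset X) {p : Str X}
    (hp : IsDeterminedByStrictUpperSet p) : IsSpecial p := by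
  obtain ⟨-, -, hshape, a, ha, hab⟩ := p.2
  rcases hshape with ⟨-, -, hBfin, -⟩ | ⟨y, hy, hA, hB⟩
  · have hpa : specialStr a (p.2.1 ha) = p :=
      hp _ fun r hr => strLT_specialStr_of_strLT ha hab hr
    have hB : p.1.2 = {z ∈ level X 2 | a < z} := by rw [← hpa]; rfl
    exact absurd (hB ▸ hBfin) (hX.infinite_setOf_lt (p.2.1 ha))
  · exact ⟨y, hy, Prod.ext hA hB⟩

lemma exists_strLT_of_mub_eq_singleton (h : krullDim X = 2) {x d : X} (hx : x ∈ level X 1)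
    (hd : d ∈ level X 2) (hxd : x < d) {K : Set X} (hK1 : K ⊆ level X 1) (hKfin : K.Finite)
    (hxK : x ∉ K) (hmub : mub X K = {d}) :
    ∃ r : Str X, r.1 = (insert x K, {d}) ∧ strLT (specialStr x hx) r := by
  have hdK : d ∈ mub X K := hmub ▸ mem_singleton d
  have hKd : ∀ w ∈ K, w < d := fun w hw =>
    lt_of_le_of_mem_level (by decide) (hK1 hw) hd (hdK.1 hw)
  obtain ⟨k, hk⟩ : K.Nonempty := nonempty_iff_ne_empty.2 fun hK =>
    hdK.2 x (by simp [hK]) hxd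
  have hkx : k ≠ x := fun hkx => hxK (hkx ▸ hk)
  have hxC : {x} ⊂ insert x K :=
    ssubset_iff_subset_ne.2 ⟨singleton_subset_iff.2 (mem_insert x K),
      fun he => hkx (mem_singleton_iff.1 (he ▸ mem_insert_of_mem x hk))⟩
  have hmem : StrMem X (insert x K) {d} :=
    ⟨insert_subset hx hK1, singleton_subset_iff.2 hd,
      Or.inl ⟨hKfin.insert x, insert_nonempty x K, finite_singleton d, singleton_nonempty d⟩,
      x, mem_insert x K, fun b hb => (mem_singleton_iff.1 hb) ▸ hxd⟩
  have := wellFoundedLT_of_krullDim_ne_top (h ▸ by decide : krullDim X ≠ ⊤)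
  refine ⟨⟨_, hmem⟩, rfl, Or.inr ⟨K, hxC, singleton_subset_iff.2 ⟨hd, hxd⟩, subset_insert x K,
    ⟨k, hk⟩, fun w hw b hb => (mem_singleton_iff.1 hb) ▸ hKd w hw, ?_⟩,
    fun he => hxC.ne (congrArg (·.1.1) he)⟩
  intro _ _ m _ hKm
  have hdm : d ≤ m := le_of_mub_eq_singleton hmub fun w hw => (hKm w hw).le
  exact (hdm.eq_or_lt.resolve_right (not_lt_of_mem_level_two h hd m)).symm

theorem IsSpecial.isDeterminedByStrictUpperSet (hX : IsJPoset X) {p : Str X}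
    (hp : IsSpecial p) : IsDeterminedByStrictUpperSet p := by
  obtain ⟨x, hx, hpx⟩ := hp
  obtain rfl : p = specialStr x hx := Subtype.ext hpx
  intro q hsub
  have key : ∀ d ∈ {z ∈ level X 2 | x < z}, q.1.1 = {x} ∧ d ∈ q.1.2 := by
    rintro d ⟨hd, hxd⟩
    obtain ⟨K, hK1, hKfin, hKdisj, hmub⟩ := hX.j3 d hd (insert x q.1.1)
      (insert_subset hx q.2.1) (q.2.finite_fst.insert x)
    have hxK : x ∉ K := fun hxK => disjoint_left.1 hKdisj hxK (mem_insert x _)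
    obtain ⟨r, hr, hpr⟩ :=
      exists_strLT_of_mub_eq_singleton hX.dim2 hx hd hxd hK1 hKfin hxK hmub
    obtain ⟨hqr1, hqr2⟩ := fst_ssubset_and_snd_subset_of_strLT (hsub hpr)
    rw [hr] at hqr1 hqr2
    have hqx : q.1.1 ⊆ {x} := fun a ha => (mem_insert_iff.1 (hqr1.1 ha)).resolve_right
      fun haK => disjoint_left.1 hKdisj haK (mem_insert_of_mem x ha)
    exact ⟨(subset_singleton_iff_eq.1 hqx).resolve_left q.2.nonempty_fst.ne_empty,
      hqr2 (mem_singleton d)⟩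
  obtain ⟨d₀, hd₀⟩ := (hX.infinite_setOf_lt hx).nonempty
  have hqB : {z ∈ level X 2 | x < z} ⊆ q.1.2 := fun d hd => (key d hd).2
  rcases q.2.2.2.1 with ⟨-, -, hBfin, -⟩ | ⟨y, -, hA, hB⟩
  · exact absurd (hBfin.subset hqB) (hX.infinite_setOf_lt hx)
  · obtain rfl : y = x := singleton_injective (hA.symm.trans (key d₀ hd₀).1)
    exact Subtype.ext (Prod.ext hA hB)

end Str

section Isomorphism

variable {X Y : Type*} [PartialOrder X] [PartialOrder Y] {φ : Str X → Str Y}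

lemma strLT_iff_of_strLE_iff (hφ : ∀ p q, strLE p q ↔ strLE (φ p) (φ q)) (p q : Str X) :
    strLT p q ↔ strLT (φ p) (φ q) := by
  have hinj : Function.Injective φ := fun a b hab =>
    strLE_antisymm ((hφ a b).2 (hab ▸ Or.inl ⟨rfl, rfl⟩)) ((hφ b a).2 (hab ▸ Or.inl ⟨rfl, rfl⟩))
  exact and_congr (hφ p q) hinj.ne_iff.symm

lemma IsDeterminedByStrictUpperSet.map (hsurj : Function.Surjective φ)
    (hφ : ∀ p q, strLE p q ↔ strLE (φ p) (φ q)) {p : Str X}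
    (hp : IsDeterminedByStrictUpperSet p) : IsDeterminedByStrictUpperSet (φ p) := by
  intro q' hsub
  obtain ⟨q, rfl⟩ := hsurj q'
  have hlt := strLT_iff_of_strLE_iff hφ
  rw [hp q fun r hr => (hlt q r).2 (hsub ((hlt p r).1 hr))]

end Isomorphism

/-- If `φ : Str X → Str Y` is an isomorphism and `x ∈ X₁`, then
`φ({x}, {z ∈ X₂ : z > x}) = ({s}, {z ∈ Y₂ : z > s})` for some `s ∈ Y₁`. -/
theorem stmt_13 {X Y : Type*} [PartialOrder X] [PartialOrder Y]
    (hX : IsJPoset X) (hY : IsJPoset Y)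
    (φ : Str X → Str Y) (hφsurj : Function.Surjective φ)
    (hφord : ∀ p q : Str X, strLE p q ↔ strLE (φ p) (φ q))
    (x : X) (hx : x ∈ level X 1)
    (p : Str X) (hp : p.1 = ({x}, {z ∈ level X 2 | x < z})) :
    ∃ s ∈ level Y 1, (φ p).1 = ({s}, {z ∈ level Y 2 | s < z}) :=
  ((IsSpecial.isDeterminedByStrictUpperSet hX ⟨x, hx, hp⟩).map hφsurj hφord).isSpecial hY
end
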